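/- Suppose h is a complex polynomial of degree n with a zero z₀ satisfying |z₀| > 1, and |λ| = 1. Then for all sufficiently large d, the polynomial P_d(z) = z^(d-n) h(z) + λ h*(z) has at least one zero of absolute value greater than 1; hence if P_d has all its zeros on the unit circle for all sufficiently large d, then h has all its zeros in |z| ≤ 1. -/

import Mathlib

open Polynomial

noncomputable def conjReciprocal (h : Polynomial ℂ) : Polynomial ℂ :=
  (h.map (starRingEnd ℂ)).reverse

open Filter Metric Topology

/-! On a small circle around `z₀` that avoids the other zeros of `h` and stays outside the
unit disc, `z ^ k * h z` grows geometrically in `k` while `q` stays bounded, whereas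
`(X ^ k * h + q)(z₀) = q(z₀)` does not depend on `k`. For large `k` the modulus at the centre is
therefore smaller than everywhere on the circle, and the minimum modulus principle (the maximum
modulus principle for the reciprocal) forces a zero inside. -/

theorem Complex.exists_eq_zero_of_norm_lt_frontier {E : Type*} [NormedAddCommGroup E]
    [NormedSpace ℂ E] [FiniteDimensional ℂ E] [Nontrivial E] {f : E → ℂ} {U : Set E}
    (hU : Bornology.IsBounded U) (hf : DiffContOnCl ℂ f U) {c : E} (hc : c ∈ closure U)
    (hlt : ∀ z ∈ frontier U, ‖f c‖ < ‖f z‖) : ∃ z ∈ U, f z = 0 := by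
  by_contra! hne
  have hne_closure : ∀ z ∈ closure U, f z ≠ 0 := by
    rw [closure_eq_self_union_frontier]
    rintro z (hz | hz)
    · exact hne z hz
    · exact norm_pos_iff.1 ((norm_nonneg _).trans_lt (hlt z hz))
  obtain ⟨z, hz, hmax⟩ := Complex.exists_mem_frontier_isMaxOn_norm hU
    (closure_nonempty_iff.1 ⟨c, hc⟩) (hf.inv hne_closure)
  have hzc : ‖f z‖ ≤ ‖f c‖ := by
    have := hmax hc
    simp only [Set.mem_ofPred_eq, Function.comp_apply, Pi.inv_apply, norm_inv] at this
    exact (inv_le_inv₀ (norm_pos_iff.2 (hne_closure c hc))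
      (norm_pos_iff.2 (hne_closure z (frontier_subset_closure hz)))).1 this
  exact (hlt z hz).not_ge hzc

theorem Polynomial.eventually_eval_ne_zero_on_sphere {𝕜 : Type*} [NormedField 𝕜] {p : 𝕜[X]}
    (hp : p ≠ 0) (z₀ : 𝕜) : ∀ᶠ ρ in 𝓝[>] (0 : ℝ), ∀ z ∈ sphere z₀ ρ, p.eval z ≠ 0 := by
  have hroots : {z | p.IsRoot z}ᶜ ∈ 𝓝[≠] z₀ := by
    have := (finite_setOfPred_isRoot hp).compl_mem_codiscrete
    rw [mem_codiscrete] at this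
    simpa using this z₀
  obtain ⟨ε, hε, hball⟩ := mem_nhdsWithin_iff.1 hroots
  filter_upwards [Ioo_mem_nhdsGT hε] with ρ hρ z hz
  refine hball ⟨mem_ball.2 (hz.symm ▸ hρ.2), ?_⟩
  rintro rfl
  simp only [mem_sphere, dist_self] at hz
  exact hρ.1.ne hz

theorem Polynomial.eventually_exists_eval_pow_mul_add_eq_zero {h : ℂ[X]} (hh : h ≠ 0)
    (q : ℂ[X]) {z₀ : ℂ} (h0 : h.eval z₀ = 0) (habs : 1 < ‖z₀‖) {ε : ℝ} (hε : 0 < ε) :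
    ∀ᶠ k in atTop, ∃ z ∈ ball z₀ ε, (X ^ k * h + q).eval z = 0 := by
  obtain ⟨ρ, hsphere, (hρ : 0 < ρ), hρε, hρ1⟩ := ((eventually_eval_ne_zero_on_sphere hh z₀).and
    (eventually_mem_nhdsWithin.and (nhdsWithin_le_nhds
      ((eventually_lt_nhds hε).and (eventually_lt_nhds (sub_pos.2 habs)))))).exists
  obtain ⟨w, hw, hmin⟩ := (isCompact_sphere z₀ ρ).exists_isMinOn
    (NormedSpace.sphere_nonempty.2 hρ.le) h.continuous.norm.continuousOn
  obtain ⟨M, hM⟩ :=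
    (isCompact_sphere z₀ ρ).exists_bound_of_continuousOn q.continuous.continuousOn
  set r := ‖z₀‖ - ρ
  have hr : 1 < r := by linarith
  have hnorm : ∀ z ∈ sphere z₀ ρ, r ≤ ‖z‖ := fun z hz => by
    linarith [norm_sub_norm_le z₀ z, mem_sphere'.1 hz, dist_eq_norm z₀ z]
  have hgrow : ∀ᶠ k in atTop, M + ‖q.eval z₀‖ < r ^ k * ‖h.eval w‖ :=
    ((tendsto_pow_atTop_atTop_of_one_lt hr).atTop_mul_const
      (norm_pos_iff.2 (hsphere w hw))).eventually_gt_atTop _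
  filter_upwards [hgrow] with k hk
  have hlt : ∀ z ∈ frontier (ball z₀ ρ),
      ‖(X ^ k * h + q).eval z₀‖ < ‖(X ^ k * h + q).eval z‖ := by
    rw [frontier_ball z₀ hρ.ne']
    intro z hz
    have hzk : r ^ k * ‖h.eval w‖ ≤ ‖z ^ k * h.eval z‖ := by
      rw [norm_mul, norm_pow]
      exact mul_le_mul (pow_le_pow_left₀ (by linarith) (hnorm z hz) k) (hmin hz)
        (norm_nonneg _) (by positivity)
    simp only [eval_add, eval_mul, eval_pow, eval_X, h0, mul_zero, zero_add]
    have htri := norm_sub_le (z ^ k * h.eval z + q.eval z) (q.eval z)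
    rw [add_sub_cancel_right] at htri
    linarith [hM z hz]
  obtain ⟨z, hz, hz0⟩ := Complex.exists_eq_zero_of_norm_lt_frontier isBounded_ball
    (Polynomial.differentiable _).diffContOnCl (subset_closure (mem_ball_self hρ)) hlt
  exact ⟨z, ball_subset_ball hρε.le hz, hz0⟩

theorem stmt_9 (h : Polynomial ℂ) (n : ℕ) (lam z₀ : ℂ)
    (h0 : h.eval z₀ = 0) (habs : 1 < ‖z₀‖) :
    ∃ K : ℕ, ∀ d : ℕ, K < d →
      ∃ z : ℂ, (X ^ (d - n) * h + C lam * conjReciprocal h).eval z = 0 ∧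
        1 < ‖z‖ := by
  rcases eq_or_ne h 0 with rfl | hh
  · exact ⟨0, fun _ _ => ⟨2, by simp [conjReciprocal], by norm_num⟩⟩
  obtain ⟨K, hK⟩ := eventually_atTop.1 ((tendsto_sub_atTop_nat n).eventually
    (eventually_exists_eval_pow_mul_add_eq_zero hh (C lam * conjReciprocal h) h0 habs
      (sub_pos.2 habs)))
  refine ⟨K, fun d hd => ?_⟩
  obtain ⟨z, hz, hz0⟩ := hK d hd.le
  exact ⟨z, hz0, by linarith [norm_sub_norm_le z₀ z, mem_ball'.1 hz, dist_eq_norm z₀ z]⟩
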